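/- arXiv:2412.14441 — 2 statements merged into one kernel-verified Lean document; each statement's English description precedes it below -/
import Mathlib

section
/- If matrix multiplication of m×m matrices over a ring can be done with fewer than m^α scalar multiplications (a < m^α where a is the number of multiplications, b = m), then the recursive algorithm multiplies n×n matrices in O(n^α) ring operations for all n that are powers of m. -/
/-!
Write `M = m^α`. Since `2 ≤ α` and `m ≥ 1`, the additive cost of level `k + 1` is
`C (m^(k+1))² ≤ C m² M^k`, so `T` satisfies `T (k+1) ≤ a T k + B M^k` with `a < M`.
Such a sequence is `O(M^k)`: `K M^k` dominates it as soon as `K ≥ T 0` and `a K + B ≤ K M`,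
i.e. `K ≥ B / (M - a)`.
-/

theorem le_max_div_mul_pow_of_le_mul_add {a M B : ℝ} (ha : 0 ≤ a) (haM : a < M) {T : ℕ → ℝ}
    (hrec : ∀ k, T (k + 1) ≤ a * T k + B * M ^ k) (k : ℕ) :
    T k ≤ max (T 0) (B / (M - a)) * M ^ k := by
  set K := max (T 0) (B / (M - a))
  have hB : B ≤ K * (M - a) := (div_le_iff₀ (sub_pos.2 haM)).1 (le_max_right _ _)
  have hMk : ∀ k, 0 ≤ M ^ k := fun k => pow_nonneg (ha.trans haM.le) k
  induction k with
  | zero => simp [K]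
  | succ k ih =>
    calc T (k + 1) ≤ a * T k + B * M ^ k := hrec k
      _ ≤ a * (K * M ^ k) + K * (M - a) * M ^ k := by gcongr; exact hMk k
      _ = K * M ^ (k + 1) := by ring

theorem sq_pow_succ_le_sq_mul_rpow_pow {x α : ℝ} (hx : 1 ≤ x) (hα : 2 ≤ α) (k : ℕ) :
    (x ^ (k + 1)) ^ 2 ≤ x ^ 2 * (x ^ α) ^ k := by
  have hsq : x ^ 2 ≤ x ^ α := by
    simpa using Real.rpow_le_rpow_of_exponent_le hx hα
  calc (x ^ (k + 1)) ^ 2 = x ^ 2 * (x ^ 2) ^ k := by ring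
    _ ≤ x ^ 2 * (x ^ α) ^ k := by gcongr

theorem stmt6_general (m a : ℕ) (hm : 2 ≤ m) (α : ℝ) (hα : 2 < α) (ha : (a : ℝ) < (m : ℝ) ^ α)
    (C c₀ : ℝ) (hC : 0 ≤ C)
    (T : ℕ → ℝ) (hT0 : T 0 ≤ c₀)
    (hrec : ∀ k, T (k+1) ≤ (a : ℝ) * T k + C * ((m : ℝ) ^ (k+1)) ^ 2) :
    ∃ K : ℝ, 0 < K ∧ ∀ k, T k ≤ K * ((m : ℝ) ^ k) ^ α := by
  set M := (m : ℝ) ^ α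
  have hm1 : (1 : ℝ) ≤ m := by exact_mod_cast one_le_two.trans hm
  have hrec' : ∀ k, T (k + 1) ≤ a * T k + C * (m : ℝ) ^ 2 * M ^ k := fun k =>
    (hrec k).trans <| by
      rw [mul_assoc]; gcongr; exact sq_pow_succ_le_sq_mul_rpow_pow hm1 hα.le k
  refine ⟨max 1 (max c₀ (C * (m : ℝ) ^ 2 / (M - a))), by positivity, fun k => ?_⟩
  rw [← Real.rpow_pow_comm (by positivity)]
  calc T k ≤ max (T 0) (C * (m : ℝ) ^ 2 / (M - a)) * M ^ k :=
        le_max_div_mul_pow_of_le_mul_add a.cast_nonneg ha hrec' k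
    _ ≤ max 1 (max c₀ (C * (m : ℝ) ^ 2 / (M - a))) * M ^ k := by
        gcongr ?_ * _
        exact (max_le_max_right _ hT0).trans (le_max_right _ _)

/-- Strassen-style recursion: if `m × m` matrix multiplication over a ring uses
`a < m^α` scalar multiplications (and `O(n²)` additions per level, `2 < α`), then
the recursive algorithm's operation count on `n = m^k` is `O(n^α)`. -/
theorem stmt6 (m a : ℕ) (hm : 2 ≤ m) (α : ℝ) (hα : 2 < α) (ha : (a : ℝ) < (m : ℝ) ^ α)
    (C c₀ : ℝ) (hC : 0 ≤ C) (hc₀ : 0 ≤ c₀)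
    (T : ℕ → ℝ) (hT0 : T 0 ≤ c₀) (hTnn : ∀ k, 0 ≤ T k)
    (hrec : ∀ k, T (k+1) ≤ (a : ℝ) * T k + C * ((m : ℝ) ^ (k+1)) ^ 2) :
    ∃ K : ℝ, 0 < K ∧ ∀ k, T k ≤ K * ((m : ℝ) ^ k) ^ α :=
  stmt6_general m a hm α hα ha C c₀ hC T hT0 hrec
end

section
/- A binary hypercube on n vertices laid out in the plane with unit-area vertices and unit-width wires requires area Ω(n²): specifically, the bisection width of the n-vertex hypercube is n/2, and any planar layout of a graph with bisection width w requires area at least w²/ (a constant). -/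
/-- The hypercube graph `Q_d` on vertex set `Fin d → Bool`: two vertices are
adjacent iff they differ in exactly one coordinate. -/
def hypercube (d : ℕ) : SimpleGraph (Fin d → Bool) :=
  SimpleGraph.fromRel (fun x y => (Finset.univ.filter (fun i => x i ≠ y i)).card = 1)

/-- The number of edges of `G` crossing the cut `(S, Sᶜ)`. -/
noncomputable def crossCount {V : Type*} (G : SimpleGraph V) (S : Set V) : ℕ :=
  {p : V × V | p.1 ∈ S ∧ p.2 ∉ S ∧ G.Adj p.1 p.2}.ncard

/-- A Thompson-style planar grid layout of a graph `G`: vertices occupy distinct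
unit-area grid points of a `Wd × Ht` box, each edge is routed as a unit-width
grid path inside the box, and routes of distinct edges use disjoint unit grid
segments (crossings at points are allowed). -/
structure GridLayout {V : Type*} (G : SimpleGraph V) where
  Wd : ℕ
  Ht : ℕ
  pos : V → ℤ × ℤ
  pos_inj : Function.Injective pos
  pos_mem : ∀ v, 0 ≤ (pos v).1 ∧ (pos v).1 < Wd ∧ 0 ≤ (pos v).2 ∧ (pos v).2 < Ht
  route : V → V → List (ℤ × ℤ)
  route_head : ∀ u v, G.Adj u v → (route u v).head? = some (pos u)
  route_last : ∀ u v, G.Adj u v → (route u v).getLast? = some (pos v)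
  route_chain : ∀ u v, G.Adj u v →
    (route u v).Chain' (fun p q => |p.1 - q.1| + |p.2 - q.2| = 1)
  route_mem : ∀ u v, G.Adj u v → ∀ p ∈ route u v,
    0 ≤ p.1 ∧ p.1 < Wd ∧ 0 ≤ p.2 ∧ p.2 < Ht
  seg_disjoint : ∀ u v u' v', G.Adj u v → G.Adj u' v' → s(u, v) ≠ s(u', v') →
    ∀ sg ∈ (route u v).zip (route u v).tail,
      sg ∉ (route u' v').zip (route u' v').tail ∧
      (sg.2, sg.1) ∉ (route u' v').zip (route u' v').tail

/-!
The inequality `e(S, Sᶜ) ≥ min(|S|, |Sᶜ|)` holds trivially on one vertex and survives the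
Cartesian product with `K₂`: a cut of `G □ K₂` contains the cuts of both layers plus at least
`||S₀| - |S₁||` rungs. As `Q_{d+1} ≅ Q_d □ K₂`, every balanced cut of `Q_{d+1}` has at least
`2^d` edges, and the cut along one coordinate has exactly `2^d`.

In a grid layout, the `m` vertices whose positions come first lexicographically are separated
from the others by a staircase crossing at most `Ht + 1` unit segments. Each crossing edge
routes through one of these segments and distinct edges share none, so the bisection width is
at most `Ht + 1 ≤ 2 Ht`, and by transposing also at most `2 Wd`; the area is thus at least a
quarter of its square.
-/

open Finset SimpleGraph

theorem Set.ncard_eq_ncard_preimage_false_add_true {V : Type*} [Finite V] (A : Set (V × Bool)) :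
    A.ncard = ((·, false) ⁻¹' A).ncard + ((·, true) ⁻¹' A).ncard := by
  have hA : A = (·, false) '' ((·, false) ⁻¹' A) ∪ (·, true) '' ((·, true) ⁻¹' A) := by
    ext ⟨v, b⟩
    cases b <;> simp
  nth_rewrite 1 [hA]
  rw [Set.ncard_union_eq (Set.disjoint_left.2 (by rintro _ ⟨v, -, rfl⟩ ⟨w, -, h⟩; simp at h)),
    Set.ncard_image_of_injective _ (Prod.mk_left_injective false),
    Set.ncard_image_of_injective _ (Prod.mk_left_injective true)]

namespace SimpleGraph

variable {V W : Type*}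

def crossingPairs (G : SimpleGraph V) (S : Set V) : Set (V × V) :=
  {p | p.1 ∈ S ∧ p.2 ∉ S ∧ G.Adj p.1 p.2}

theorem crossCount_eq_ncard_crossingPairs (G : SimpleGraph V) (S : Set V) :
    crossCount G S = (G.crossingPairs S).ncard := rfl

theorem crossCount_empty (G : SimpleGraph V) : crossCount G ∅ = 0 := by
  simp [crossCount]

theorem crossCount_image_iso {G : SimpleGraph V} {G' : SimpleGraph W} (e : G ≃g G')
    (S : Set V) : crossCount G' (e '' S) = crossCount G S := by
  have he : Function.Bijective (Prod.map e e) := e.bijective.prodMap e.bijective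
  have : G.crossingPairs S = Prod.map e e ⁻¹' G'.crossingPairs (e '' S) := by
    ext ⟨u, v⟩
    simp only [crossingPairs, Set.mem_preimage, Set.mem_ofPred_eq, Prod.map_fst, Prod.map_snd,
      e.injective.mem_set_image, e.map_adj_iff]
  rw [crossCount_eq_ncard_crossingPairs, crossCount_eq_ncard_crossingPairs, this,
    Set.ncard_preimage_of_injective_subset_range he.1 (by simp [he.2.range_eq])]

def HasUnitEdgeExpansion (G : SimpleGraph V) : Prop :=
  ∀ S : Set V, min S.ncard Sᶜ.ncard ≤ crossCount G S

theorem HasUnitEdgeExpansion.of_iso {G : SimpleGraph V} {G' : SimpleGraph W} (e : G ≃g G')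
    (h : G'.HasUnitEdgeExpansion) : G.HasUnitEdgeExpansion := by
  intro S
  have := h (e '' S)
  rwa [crossCount_image_iso, ← Set.image_compl_eq e.bijective,
    Set.ncard_image_of_injective _ e.injective,
    Set.ncard_image_of_injective _ e.injective] at this

theorem HasUnitEdgeExpansion.ncard_le_crossCount [Finite V] {G : SimpleGraph V}
    (h : G.HasUnitEdgeExpansion) {S : Set V} (hS : 2 * S.ncard = Nat.card V) :
    S.ncard ≤ crossCount G S := by
  have := h S
  have := Set.ncard_add_ncard_compl S
  omega

theorem add_le_crossCount_boxProd_top [Finite V] (G : SimpleGraph V) (A : Set (V × Bool)) :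
    crossCount G ((·, false) ⁻¹' A) + crossCount G ((·, true) ⁻¹' A) +
      ((·, false) ⁻¹' A \ (·, true) ⁻¹' A).ncard + ((·, true) ⁻¹' A \ (·, false) ⁻¹' A).ncard ≤
      crossCount (G □ ⊤) A := by
  set A₀ := (·, false) ⁻¹' A
  set A₁ := (·, true) ⁻¹' A
  let layer (b : Bool) (p : V × V) : (V × Bool) × (V × Bool) := ((p.1, b), (p.2, b))
  let rung (b : Bool) (v : V) : (V × Bool) × (V × Bool) := ((v, b), (v, !b))
  have hlayer (b : Bool) : (layer b).Injective := fun p q h => by simp_all [layer, Prod.ext_iff]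
  have hrung (b : Bool) : (rung b).Injective := fun v w h => by simp_all [rung, Prod.ext_iff]
  have hsub : layer false '' G.crossingPairs A₀ ∪ layer true '' G.crossingPairs A₁ ∪
      rung false '' (A₀ \ A₁) ∪ rung true '' (A₁ \ A₀) ⊆ (G □ ⊤).crossingPairs A := by
    rintro _ (((⟨p, hp, rfl⟩ | ⟨p, hp, rfl⟩) | ⟨v, hv, rfl⟩) | ⟨v, hv, rfl⟩) <;>
      simp_all [crossingPairs, layer, rung, A₀, A₁]
  have h := Set.ncard_le_ncard hsub
  rw [Set.ncard_union_eq, Set.ncard_union_eq, Set.ncard_union_eq] at h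
  · simpa only [Set.ncard_image_of_injective _ (hlayer _), Set.ncard_image_of_injective _ (hrung _),
      crossCount_eq_ncard_crossingPairs] using h
  all_goals
    refine Set.disjoint_left.2 ?_
    rintro _ h ⟨x, -, rfl⟩
    simp_all [layer, rung]

theorem HasUnitEdgeExpansion.boxProd_top_bool [Finite V] {G : SimpleGraph V}
    (hG : G.HasUnitEdgeExpansion) : (G □ (⊤ : SimpleGraph Bool)).HasUnitEdgeExpansion := by
  intro A
  have hcut := add_le_crossCount_boxProd_top G A
  have hA := Set.ncard_eq_ncard_preimage_false_add_true A
  have hAc := Set.ncard_eq_ncard_preimage_false_add_true Aᶜ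
  have h₀ := hG ((·, false) ⁻¹' A)
  have h₁ := hG ((·, true) ⁻¹' A)
  have hc₀ := Set.ncard_add_ncard_compl ((·, false) ⁻¹' A)
  have hc₁ := Set.ncard_add_ncard_compl ((·, true) ⁻¹' A)
  have hd₀ := Set.le_ncard_sdiff ((·, true) ⁻¹' A) ((·, false) ⁻¹' A)
  have hd₁ := Set.le_ncard_sdiff ((·, false) ⁻¹' A) ((·, true) ⁻¹' A)
  simp only [Set.preimage_compl] at hAc
  omega

theorem crossCount_boxProd_top_setOf_snd (G : SimpleGraph V) :
    crossCount (G □ ⊤) {p : V × Bool | p.2 = true} = Nat.card V := by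
  have : (G □ ⊤).crossingPairs {p : V × Bool | p.2 = true} =
      Set.range fun v : V => ((v, true), (v, false)) := by
    ext ⟨⟨u, a⟩, ⟨v, b⟩⟩
    cases a <;> cases b <;> simp [crossingPairs, boxProd_adj]
  rw [crossCount_eq_ncard_crossingPairs, this, ← Set.image_univ,
    Set.ncard_image_of_injective _ fun v w h => by simpa using h, Set.ncard_univ]

end SimpleGraph

namespace List

variable {α : Type*}

theorem IsChain.rel_of_mem_zip_tail {r : α → α → Prop} {l : List α} (hl : l.IsChain r)
    {a b : α} (h : (a, b) ∈ l.zip l.tail) : r a b := by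
  induction l using twoStepInduction with grind

theorem exists_mem_zip_tail_of_head?_of_getLast? (p : α → Prop) {l : List α} {a b : α}
    (ha : l.head? = some a) (hb : l.getLast? = some b) (hpa : p a) (hpb : ¬ p b) :
    ∃ x y, (x, y) ∈ l.zip l.tail ∧ p x ∧ ¬ p y := by
  induction l using twoStepInduction generalizing a with grind

end List

theorem Set.exists_ncard_Iic_eq {α : Type*} [LinearOrder α] [Finite α] {m : ℕ} (h₀ : 0 < m)
    (hm : m ≤ Nat.card α) : ∃ a : α, (Set.Iic a).ncard = m := by
  have := Fintype.ofFinite α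
  let e := Fintype.orderIsoFinOfCardEq α (Nat.card_eq_fintype_card (α := α)).symm
  refine ⟨e ⟨m - 1, by omega⟩, ?_⟩
  rw [← e.image_Iic, Set.ncard_image_of_injective _ e.injective, ← Finset.coe_Iic,
    Set.ncard_coe_finset, Fin.card_Iic, Fin.val_mk]
  omega

namespace GridLayout

variable {V : Type*} {G : SimpleGraph V}

theorem crossCount_preimage_le_card (L : GridLayout G) (R : Set (ℤ × ℤ))
    (B : Finset ((ℤ × ℤ) × (ℤ × ℤ)))
    (hB : ∀ p q : ℤ × ℤ, p ∈ R → q ∉ R → |p.1 - q.1| + |p.2 - q.2| = 1 →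
      0 ≤ p.1 ∧ p.1 < L.Wd ∧ 0 ≤ p.2 ∧ p.2 < L.Ht → (p, q) ∈ B) :
    crossCount G (L.pos ⁻¹' R) ≤ #B := by
  have hcross : ∀ e ∈ G.crossingPairs (L.pos ⁻¹' R),
      ∃ s ∈ (L.route e.1 e.2).zip (L.route e.1 e.2).tail, s.1 ∈ R ∧ s.2 ∉ R := by
    rintro ⟨u, v⟩ ⟨hu, hv, huv⟩
    obtain ⟨p, q, hpq, hp, hq⟩ := List.exists_mem_zip_tail_of_head?_of_getLast? (· ∈ R)
      (L.route_head u v huv) (L.route_last u v huv) hu hv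
    exact ⟨(p, q), hpq, hp, hq⟩
  choose! seg hseg hseg_in hseg_out using hcross
  rw [crossCount_eq_ncard_crossingPairs, ← Set.ncard_coe_finset]
  refine Set.ncard_le_ncard_of_injOn seg (fun e he => ?_) (fun e he e' he' h => ?_)
  · have hadj := he.2.2
    exact hB _ _ (hseg_in e he) (hseg_out e he)
      ((L.route_chain _ _ hadj).rel_of_mem_zip_tail (hseg e he))
      (L.route_mem _ _ hadj _ (List.of_mem_zip (hseg e he)).1)
  · by_contra hne
    have hsym : s(e.1, e.2) ≠ s(e'.1, e'.2) := by
      rw [Ne, Sym2.eq_iff]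
      rintro (⟨h₁, h₂⟩ | ⟨h₁, -⟩)
      · exact hne (Prod.ext h₁ h₂)
      · exact he'.2.1 (h₁ ▸ he.1)
    exact (L.seg_disjoint _ _ _ _ he.2.2 he'.2.2 hsym _ (hseg e he)).1 (h ▸ hseg e' he')

theorem crossCount_preimage_lexIic_le (L : GridLayout G) (t : ℤ × ℤ) :
    crossCount G (L.pos ⁻¹' {z | toLex z ≤ toLex t}) ≤ L.Ht + 1 := by
  obtain ⟨x, y⟩ := t
  -- A unit step out of the region goes right, from column `x` in the rows `≤ y` and from
  -- column `x - 1` above them, or goes up from `(x, y)`.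
  let rightStep (b : ℤ) : (ℤ × ℤ) × (ℤ × ℤ) :=
    if b ≤ y then ((x, b), (x + 1, b)) else ((x - 1, b), (x, b))
  calc crossCount G _ ≤ #((Ico 0 (L.Ht : ℤ)).image rightStep ∪ {((x, y), (x, y + 1))}) := by
        refine L.crossCount_preimage_le_card _ _ fun ⟨a, b⟩ ⟨c, e⟩ hp hq hstep hbox => ?_
        simp only [Set.mem_ofPred_eq, Prod.Lex.toLex_le_toLex] at hp hq
        dsimp only at hbox hstep
        rw [Int.abs_eq_natAbs, Int.abs_eq_natAbs] at hstep
        simp only [mem_union, mem_image, mem_Ico, mem_singleton, Prod.mk.injEq]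
        by_cases hv : c = a
        · right
          omega
        · refine Or.inl ⟨b, ⟨hbox.2.2.1, hbox.2.2.2⟩, ?_⟩
          simp only [rightStep]
          split_ifs <;> simp only [Prod.mk.injEq, and_true] <;> omega
    _ ≤ L.Ht + 1 := by
        refine (card_union_le _ _).trans ?_
        rw [card_singleton]
        gcongr
        exact card_image_le.trans (by simp)

def transpose (L : GridLayout G) : GridLayout G where
  Wd := L.Ht
  Ht := L.Wd
  pos v := (L.pos v).swap
  pos_inj := Prod.swap_injective.comp L.pos_inj
  pos_mem v := let ⟨h₁, h₂, h₃, h₄⟩ := L.pos_mem v; ⟨h₃, h₄, h₁, h₂⟩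
  route u v := (L.route u v).map Prod.swap
  route_head u v h := by rw [List.head?_map, L.route_head u v h]; rfl
  route_last u v h := by rw [List.getLast?_map, L.route_last u v h]; rfl
  route_chain u v h :=
    (List.isChain_map _).2 ((L.route_chain u v h).imp fun p q hpq => by simpa [add_comm] using hpq)
  route_mem u v h p hp := by
    obtain ⟨q, hq, rfl⟩ := List.mem_map.1 hp
    obtain ⟨h₁, h₂, h₃, h₄⟩ := L.route_mem u v h q hq
    exact ⟨h₃, h₄, h₁, h₂⟩
  seg_disjoint u v u' v' h h' hne sg hsg := by
    simp only [← List.map_tail, List.zip_map, List.mem_map] at hsg ⊢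
    obtain ⟨s, hs, rfl⟩ := hsg
    simpa [Prod.ext_iff] using L.seg_disjoint u v u' v' h h' hne s hs

theorem exists_ncard_eq_crossCount_le [Finite V] (L : GridLayout G) {m : ℕ}
    (hm : m ≤ Nat.card V) : ∃ S : Set V, S.ncard = m ∧ crossCount G S ≤ L.Ht + 1 := by
  rcases Nat.eq_zero_or_pos m with rfl | hm₀
  · exact ⟨∅, Set.ncard_empty V, by simp [crossCount_empty G]⟩
  let : LinearOrder V := LinearOrder.lift' (toLex ∘ L.pos) (toLex.injective.comp L.pos_inj)
  obtain ⟨v, hv⟩ := Set.exists_ncard_Iic_eq hm₀ hm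
  exact ⟨Set.Iic v, hv, L.crossCount_preimage_lexIic_le (L.pos v)⟩

theorem le_ht_add_one [Finite V] (L : GridLayout G) {w : ℕ}
    (hw : ∀ S : Set V, 2 * S.ncard = Nat.card V → w ≤ crossCount G S)
    (hV : Even (Nat.card V)) : w ≤ L.Ht + 1 := by
  obtain ⟨S, hS, hcut⟩ :=
    L.exists_ncard_eq_crossCount_le (m := Nat.card V / 2) (Nat.div_le_self _ _)
  exact (hw S (by rw [hS]; exact Nat.two_mul_div_two_of_even hV)).trans hcut

theorem sq_le_four_mul_area [Finite V] (L : GridLayout G) {w : ℕ}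
    (hw : ∀ S : Set V, 2 * S.ncard = Nat.card V → w ≤ crossCount G S)
    (hV : Even (Nat.card V)) : w ^ 2 ≤ 4 * (L.Wd * L.Ht) := by
  cases isEmpty_or_nonempty V with
  | inl _ =>
    have := hw ∅ (by simp)
    rw [crossCount_empty G] at this
    simp_all
  | inr hne =>
    obtain ⟨v⟩ := hne
    have hbox := L.pos_mem v
    have hht := L.le_ht_add_one hw hV
    have hwd := L.transpose.le_ht_add_one hw hV
    change w ≤ L.Wd + 1 at hwd
    have : 1 ≤ L.Ht := by omega
    have : 1 ≤ L.Wd := by omega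
    nlinarith

end GridLayout

theorem hammingDist_snoc {β : Type*} [DecidableEq β] {d : ℕ} (x y : Fin d → β) (a b : β) :
    hammingDist (Fin.snoc x a : Fin (d + 1) → β) (Fin.snoc y b) =
      hammingDist x y + if a = b then 0 else 1 := by
  simp only [hammingDist, card_filter, Fin.sum_univ_castSucc, Fin.snoc_castSucc, Fin.snoc_last]
  split_ifs <;> simp_all

theorem hypercube_adj {d : ℕ} {x y : Fin d → Bool} :
    (hypercube d).Adj x y ↔ hammingDist x y = 1 := by
  change x ≠ y ∧ (hammingDist x y = 1 ∨ hammingDist y x = 1) ↔ _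
  rw [hammingDist_comm y x, or_self]
  exact ⟨And.right, fun h => ⟨fun hxy => by simp [hxy] at h, h⟩⟩

def hypercubeSuccIso (d : ℕ) : (hypercube d □ (⊤ : SimpleGraph Bool)) ≃g hypercube (d + 1) where
  toFun p := Fin.snoc p.1 p.2
  invFun x := (Fin.init x, x (Fin.last d))
  left_inv p := by simp
  right_inv x := Fin.snoc_init_self x
  map_rel_iff' {p q} := by
    rw [Equiv.coe_fn_mk, hypercube_adj, hammingDist_snoc, boxProd_adj, hypercube_adj, top_adj,
      ← hammingDist_eq_zero]
    by_cases h : p.2 = q.2 <;> simp [h]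

theorem hypercube_hasUnitEdgeExpansion (d : ℕ) : (hypercube d).HasUnitEdgeExpansion := by
  induction d with
  | zero =>
    intro S
    have := Set.ncard_add_ncard_compl S
    simp only [Nat.card_unique] at this
    omega
  | succ d ih => exact ih.boxProd_top_bool.of_iso (hypercubeSuccIso d).symm

theorem isLeast_bisection_hypercube (d : ℕ) :
    IsLeast {w : ℕ | ∃ S : Set (Fin (d + 1) → Bool),
      2 * S.ncard = Fintype.card (Fin (d + 1) → Bool) ∧ crossCount (hypercube (d + 1)) S = w}
      (2 ^ d) := by
  have hcard : Fintype.card (Fin (d + 1) → Bool) = 2 * 2 ^ d := by simp [pow_succ']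
  constructor
  · let e := hypercubeSuccIso d
    refine ⟨e '' {p | p.2 = true}, ?_, ?_⟩
    · rw [Set.ncard_image_of_injective _ e.injective,
        Set.ncard_eq_ncard_preimage_false_add_true, hcard]
      simp
    · rw [crossCount_image_iso, crossCount_boxProd_top_setOf_snd]
      simp
  · rintro w ⟨S, hS, rfl⟩
    have := (hypercube_hasUnitEdgeExpansion (d + 1)).ncard_le_crossCount
      (hS.trans Nat.card_eq_fintype_card.symm)
    omega

/-- The bisection width of the hypercube on `n = 2^d` vertices is `n/2 = 2^{d-1}`,
and any planar grid layout of a graph needs area at least the square of its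
bisection width divided by a constant; hence a planar layout of the hypercube
requires area `Ω(n²)`. -/
theorem stmt17 :
    ∃ c : ℝ, 0 < c ∧ ∀ d : ℕ, 1 ≤ d →
      IsLeast {w : ℕ | ∃ S : Set (Fin d → Bool),
          2 * S.ncard = Fintype.card (Fin d → Bool) ∧ crossCount (hypercube d) S = w}
        (2 ^ (d - 1)) ∧
      ∀ L : GridLayout (hypercube d),
        ((2:ℝ) ^ (d - 1)) ^ 2 / c ≤ ((L.Wd * L.Ht : ℕ) : ℝ) := by
  refine ⟨4, by norm_num, fun d hd => ?_⟩
  obtain ⟨d, rfl⟩ : ∃ k, d = k + 1 := ⟨d - 1, by omega⟩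
  rw [Nat.add_sub_cancel]
  have hbisection := isLeast_bisection_hypercube d
  refine ⟨hbisection, fun L => ?_⟩
  have harea := L.sq_le_four_mul_area (w := 2 ^ d)
    (fun S hS => hbisection.2 ⟨S, hS.trans Nat.card_eq_fintype_card, rfl⟩)
    (by simp [pow_succ])
  rw [div_le_iff₀ (by norm_num)]
  exact_mod_cast (mul_comm (L.Wd * L.Ht) 4 ▸ harea)
end
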